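/- Let k ≡ 4 (mod 11) be a positive integer, and set b = 30k, a = (150k − 6)/11, c = (180k − 5)/11, t = (900k² − 1)/11. Then a, c, t are positive integers satisfying a < c < b, gcd(t, 30) = 1, ab + c = 5t, and cb + a = 6t; consequently the two-digit number ab + c is a v-palindrome in base 30k. -/

import Mathlib

/-- `v n` sums, over the prime factorization of `n`, each prime plus its
exponent when the exponent is at least `2` (primes with exponent `1`
contribute just the prime). -/
def v (n : ℕ) : ℕ :=
  ∑ p ∈ n.primeFactors, (p + if 2 ≤ n.factorization p then n.factorization p else 0)

/-- Base-`b` digit reversal. -/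
def revDigits (b n : ℕ) : ℕ := Nat.ofDigits b (Nat.digits b n).reverse

/-- `n` is a v-palindrome in base `b`. -/
def IsVPalindrome (b n : ℕ) : Prop :=
  ¬ b ∣ n ∧ n ≠ revDigits b n ∧ v n = v (revDigits b n)

/-
If `gcd(t, 30) = 1`, then `v (5 t) = 5 + v t = 2 + 3 + v t = v (6 t)`. So whenever the two-digit
number with digits `a, c` in base `b` equals `5 t` and its reversal equals `6 t`, it is a
v-palindrome. For `k = 11 m + 4` the given `a, c, t` are `150 m + 54`, `180 m + 65` and
`30 (330 m² + 240 m + 43) + 19`, and both identities are polynomial identities in `m`.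
-/

lemma v_eq_factorization_sum (n : ℕ) :
    v n = n.factorization.sum fun p e => p + if 2 ≤ e then e else 0 := by
  rw [v, Finsupp.sum, Nat.support_factorization]

lemma v_prime {p : ℕ} (hp : p.Prime) : v p = p := by
  simp [v, hp.primeFactors, hp.factorization]

lemma v_mul_of_coprime {m n : ℕ} (h : m.Coprime n) : v (m * n) = v m + v n := by
  simp only [v_eq_factorization_sum, Nat.factorization_mul_of_coprime h]
  exact Finsupp.sum_add_index_of_disjoint h.disjoint_primeFactors _

lemma v_six : v 6 = v 5 := by
  rw [show 6 = 2 * 3 by rfl, v_mul_of_coprime (by norm_num), v_prime Nat.prime_two,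
    v_prime Nat.prime_three, v_prime Nat.prime_five]

lemma revDigits_two_digits {a b c : ℕ} (ha : 0 < a) (hab : a < b) (hcb : c < b) :
    revDigits b (a * b + c) = c * b + a := by
  rw [revDigits, show a * b + c = c + b * a by ring,
    Nat.digits_add b (by omega) c a hcb (Or.inr ha.ne'), Nat.digits_of_lt b a ha.ne' hab]
  simp only [List.reverse_cons, List.reverse_nil, List.nil_append, List.cons_append,
    Nat.ofDigits_cons, Nat.ofDigits_nil]
  ring

theorem isVPalindrome_of_eq_five_mul_of_eq_six_mul {a b c t : ℕ} (ha : 0 < a) (hac : a < c)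
    (hcb : c < b) (ht : t.Coprime 30) (h5 : a * b + c = 5 * t) (h6 : c * b + a = 6 * t) :
    IsVPalindrome b (a * b + c) := by
  have ht0 : t ≠ 0 := by rintro rfl; omega
  have hrev : revDigits b (a * b + c) = c * b + a := revDigits_two_digits ha (by omega) hcb
  refine ⟨?_, ?_, ?_⟩
  · exact (Nat.dvd_add_right (dvd_mul_left b a)).not.mpr (Nat.not_dvd_of_pos_of_lt (by omega) hcb)
  · omega
  · rw [hrev, h5, h6, v_mul_of_coprime ((Nat.Coprime.coprime_dvd_right (by norm_num) ht).symm),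
      v_mul_of_coprime ((Nat.Coprime.coprime_dvd_right (by norm_num) ht).symm), v_six]

theorem stmt_14_general (k : ℕ) (hmod : k % 11 = 4) :
    let b := 30 * k
    let a := (150 * k - 6) / 11
    let c := (180 * k - 5) / 11
    let t := (900 * k ^ 2 - 1) / 11
    0 < a ∧ 0 < c ∧ 0 < t ∧ a < c ∧ c < b ∧ Nat.gcd t 30 = 1 ∧
      a * b + c = 5 * t ∧ c * b + a = 6 * t ∧ IsVPalindrome b (a * b + c) := by
  obtain ⟨m, rfl⟩ : ∃ m, k = 11 * m + 4 := ⟨k / 11, by omega⟩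
  have ha : (150 * (11 * m + 4) - 6) / 11 = 150 * m + 54 := by omega
  have hc : (180 * (11 * m + 4) - 5) / 11 = 180 * m + 65 := by omega
  have ht : (900 * (11 * m + 4) ^ 2 - 1) / 11 = 30 * (330 * m ^ 2 + 240 * m + 43) + 19 := by
    rw [show 900 * (11 * m + 4) ^ 2 = 11 * (30 * (330 * m ^ 2 + 240 * m + 43) + 19) + 1 by ring]
    omega
  simp only [ha, hc, ht]
  have hgcd : Nat.gcd (30 * (330 * m ^ 2 + 240 * m + 43) + 19) 30 = 1 := by
    rw [Nat.gcd_mul_left_add_left]; rfl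
  have h5 : (150 * m + 54) * (30 * (11 * m + 4)) + (180 * m + 65)
      = 5 * (30 * (330 * m ^ 2 + 240 * m + 43) + 19) := by ring
  have h6 : (180 * m + 65) * (30 * (11 * m + 4)) + (150 * m + 54)
      = 6 * (30 * (330 * m ^ 2 + 240 * m + 43) + 19) := by ring
  exact ⟨by positivity, by positivity, by positivity, by omega, by omega, hgcd, h5, h6,
    isVPalindrome_of_eq_five_mul_of_eq_six_mul (by positivity) (by omega) (by omega) hgcd h5 h6⟩

theorem stmt_14 (k : ℕ) (hk : 0 < k) (hmod : k % 11 = 4) :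
    let b := 30 * k
    let a := (150 * k - 6) / 11
    let c := (180 * k - 5) / 11
    let t := (900 * k ^ 2 - 1) / 11
    0 < a ∧ 0 < c ∧ 0 < t ∧ a < c ∧ c < b ∧ Nat.gcd t 30 = 1 ∧
      a * b + c = 5 * t ∧ c * b + a = 6 * t ∧ IsVPalindrome b (a * b + c) :=
  stmt_14_general k hmod
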